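/- Ambarzumian-type theorem for finite discrete graphs: if the Schrödinger operator L_c with potential c ≥ 0 has the same eigenvalues (with multiplicity) as the free Laplacian L_0, then c = 0. -/

import Mathlib

/-! The trace of a matrix is the sum of its eigenvalues over any eigenbasis, and an orthonormal
family of `|X|` functions in `ℓ²(X, m)` is such a basis. As a matrix, `L_c = L_0 + diag (c / m)`,
so equal spectra give `∑ x, c x / m x = tr L_c - tr L_0 = 0`; every term is nonnegative, hence
`c = 0`. -/

open Matrix

theorem Matrix.trace_eq_sum_of_mul_eq_mul_diagonal {n X R : Type*} [Fintype n] [Fintype X]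
    [DecidableEq n] [CommRing R] [IsStablyFiniteRing R] (e : n ≃ X)
    {A : Matrix X X R} {P : Matrix X n R} {Q : Matrix n X R} {d : n → R}
    (hQP : Q * P = 1) (hAP : A * P = P * diagonal d) :
    A.trace = ∑ i, d i := by
  classical
  have hPQ : P * Q = 1 := (mul_eq_one_comm_of_equiv e).mp hQP
  calc A.trace = (A * P * Q).trace := by rw [Matrix.mul_assoc, hPQ, Matrix.mul_one]
    _ = (Q * (A * P)).trace := trace_mul_comm _ _
    _ = (diagonal d).trace := by rw [hAP, ← Matrix.mul_assoc, hQP, Matrix.one_mul]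
    _ = ∑ i, d i := trace_diagonal d

theorem Matrix.trace_eq_sum_of_orthonormal_eigenfunctions {X : Type*} [Fintype X] (m : X → ℝ)
    (A : Matrix X X ℝ) (lam : Fin (Fintype.card X) → ℝ) (F : Fin (Fintype.card X) → X → ℝ)
    (horth : ∀ i j, (∑ x, F i x * F j x * m x) = if i = j then (1 : ℝ) else 0)
    (heig : ∀ n, A *ᵥ F n = lam n • F n) :
    A.trace = ∑ n, lam n := by
  refine trace_eq_sum_of_mul_eq_mul_diagonal (Fintype.equivFin X).symm
    (P := of fun x n => F n x) (Q := of fun n x => F n x * m x) ?_ ?_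
  · ext i j
    simp only [mul_apply, of_apply, one_apply, ← horth i j]
    exact Finset.sum_congr rfl fun x _ => by ring
  · ext x n
    have hx := congrFun (heig n) x
    simp only [mulVec, dotProduct, Pi.smul_apply, smul_eq_mul] at hx
    rw [mul_diagonal, mul_apply]
    simp only [of_apply, hx, mul_comm]

section Schrodinger

variable {X : Type*} [Fintype X] [DecidableEq X]

/-- The matrix of `L_c` in the standard basis of `X → ℝ`. -/
noncomputable def schrodingerMatrix (m : X → ℝ) (b : X → X → ℝ) (c : X → ℝ) : Matrix X X ℝ :=
  diagonal (fun x => (∑ y, b x y) / m x) - of (fun x y => b x y / m x) +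
    diagonal (fun x => c x / m x)

theorem schrodingerMatrix_mulVec (m : X → ℝ) (b : X → X → ℝ) (c f : X → ℝ) (x : X) :
    (schrodingerMatrix m b c *ᵥ f) x = (∑ y, b x y * (f x - f y)) / m x + c x / m x * f x := by
  have hlap : (∑ y, b x y) / m x * f x - ∑ y, b x y / m x * f y
      = (∑ y, b x y * (f x - f y)) / m x := by
    simp only [Finset.sum_div, Finset.sum_mul, ← Finset.sum_sub_distrib]
    exact Finset.sum_congr rfl fun y _ => by ring
  rw [schrodingerMatrix, add_mulVec, sub_mulVec, Pi.add_apply, Pi.sub_apply, mulVec_diagonal,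
    mulVec_diagonal, ← hlap]
  rfl

theorem trace_schrodingerMatrix (m : X → ℝ) (b : X → X → ℝ) (c : X → ℝ) :
    (schrodingerMatrix m b c).trace = (schrodingerMatrix m b 0).trace + ∑ x, c x / m x := by
  simp [schrodingerMatrix, trace_add, trace_diagonal]

end Schrodinger

theorem stmt_3_general {X : Type*} [Fintype X] (m : X → ℝ) (b : X → X → ℝ) (c : X → ℝ) (hm : ∀ x : X, 0 < m x)
    (hc : ∀ x : X, (0 : ℝ) ≤ c x)
    (lam0 lamc : Fin (Fintype.card X) → ℝ)
    (F0 Fc : Fin (Fintype.card X) → X → ℝ)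
    (horth0 : ∀ i j, (∑ x, F0 i x * F0 j x * m x) = if i = j then (1 : ℝ) else 0)
    (horthc : ∀ i j, (∑ x, Fc i x * Fc j x * m x) = if i = j then (1 : ℝ) else 0)
    (heig0 : ∀ n x, (∑ y, b x y * (F0 n x - F0 n y)) / m x = lam0 n * F0 n x)
    (heigc : ∀ n x,
      (∑ y, b x y * (Fc n x - Fc n y)) / m x + (c x / m x) * Fc n x = lamc n * Fc n x)
    (hiso : ∀ n, lamc n = lam0 n) :
    ∀ x, c x = 0 := by
  classical
  have htr0 := trace_eq_sum_of_orthonormal_eigenfunctions m (schrodingerMatrix m b 0) lam0 F0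
    horth0 fun n => funext fun x => by simp [schrodingerMatrix_mulVec, heig0]
  have htrc := trace_eq_sum_of_orthonormal_eigenfunctions m (schrodingerMatrix m b c) lamc Fc
    horthc fun n => funext fun x => by simp [schrodingerMatrix_mulVec, heigc]
  have hsum : ∑ x, c x / m x = 0 := by
    have := trace_schrodingerMatrix m b c
    simp only [htr0, htrc, hiso] at this
    linarith
  intro x
  have hcm := (Finset.sum_eq_zero_iff_of_nonneg fun y _ => div_nonneg (hc y) (hm y).le).mp
    hsum x (Finset.mem_univ x)
  simpa [(hm x).ne'] using hcm

/-- Ambarzumian-type theorem for finite discrete graphs: if the Schrödinger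
operator `L_c` with potential `c ≥ 0` has the same eigenvalues (with
multiplicity, in nondecreasing order) as the free Laplacian `L_0`, then `c = 0`. -/
theorem stmt_3 {X : Type*} [Fintype X] (m : X → ℝ) (b : X → X → ℝ) (c : X → ℝ) (hm : ∀ x : X, 0 < m x)
    (hbsymm : ∀ x y : X, b x y = b y x) (hbnonneg : ∀ x y : X, (0 : ℝ) ≤ b x y)
    (hbdiag : ∀ x : X, b x x = 0) (hc : ∀ x : X, (0 : ℝ) ≤ c x)
    (lam0 lamc : Fin (Fintype.card X) → ℝ)
    (F0 Fc : Fin (Fintype.card X) → X → ℝ)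
    (hmono0 : Monotone lam0) (hmonoc : Monotone lamc)
    (horth0 : ∀ i j, (∑ x, F0 i x * F0 j x * m x) = if i = j then (1 : ℝ) else 0)
    (horthc : ∀ i j, (∑ x, Fc i x * Fc j x * m x) = if i = j then (1 : ℝ) else 0)
    (heig0 : ∀ n x, (∑ y, b x y * (F0 n x - F0 n y)) / m x = lam0 n * F0 n x)
    (heigc : ∀ n x,
      (∑ y, b x y * (Fc n x - Fc n y)) / m x + (c x / m x) * Fc n x = lamc n * Fc n x)
    (hiso : ∀ n, lamc n = lam0 n) :
    ∀ x, c x = 0 :=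
  stmt_3_general m b c hm hc lam0 lamc F0 Fc horth0 horthc heig0 heigc hiso
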